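/- arXiv:1312.5850 — 2 statements merged into one kernel-verified Lean document; each statement's English description precedes it below -/
import Mathlib

section
/- Let b be a prime, m ≤ n, p ∈ Z_b[x] with deg(p) = n, and q = (q_1,…,q_s) ∈ Z_b[x]^s. The dual net of the higher order polynomial lattice point set P_{b^m,s}(q,p) equals D⊥(q,p) = { k = (k_1,…,k_s) ∈ ℕ₀^s : tr_n(k_1)q_1 + … + tr_n(k_s)q_s ≡ a (mod p) for some polynomial a with deg(a) < n − m }, where tr_n(k)(x) = κ_0 + κ_1 x + … + κ_{n−1} x^{n−1} for k with b-adic digits κ_0, κ_1, …. -/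
open MeasureTheory Finset

noncomputable section

/-- The truncated polynomial `tr_n(k) = κ_0 + κ_1 x + ⋯ + κ_{n-1} x^{n-1}` associated with
the `b`-adic digits `κ_0, κ_1, …` of `k`. -/
def trn (b n k : ℕ) : Polynomial (ZMod b) :=
  ∑ i ∈ Finset.range n, Polynomial.C ((k / b ^ i % b : ℕ) : ZMod b) * Polynomial.X ^ i

/-- The polynomial over `Z_b` whose coefficients are the `b`-adic digits of `k`. -/
def natToPoly (b k : ℕ) : Polynomial (ZMod b) :=
  ∑ i ∈ Finset.range (k + 1), Polynomial.C ((k / b ^ i % b : ℕ) : ZMod b) * Polynomial.X ^ i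

/-- The image of the polynomial `u(x)` in the field of formal Laurent series `Z_b((x⁻¹))`,
realized as the Laurent series `∑ u_i y^{-i}` in the variable `y = x⁻¹`. -/
def polyInv {b : ℕ} (u : Polynomial (ZMod b)) : LaurentSeries (ZMod b) :=
  ∑ i ∈ u.support, HahnSeries.single (-(i : ℤ)) (u.coeff i)

/-!
Write `v = ∑ⱼ tr_n(k_j) q_j`. Moving the digits of `k_j` into the Laurent series, the dual-net
sum for `h` is the coefficient of `x⁻¹` in `h v / p`. As `h` ranges over `h < b ^ m`, which
includes the monomials `x ^ t` for `t < m`, these all vanish iff the coefficients of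
`x⁻¹, …, x⁻ᵐ` in `v / p` vanish. Only the proper fraction `(v mod p) / p` contributes there, and
it has order `n - deg (v mod p)` in `x⁻¹`, so the condition is `deg (v mod p) < n - m`. Since
`v mod p` is the only representative of `v` modulo `p` of degree `< n`, this says exactly that
some `a` with `deg a < n - m` is congruent to `v`.
-/

open Polynomial

theorem HahnSeries.forall_coeff_natCast_add_one_eq_zero_iff {R : Type*} [Zero R]
    {g : LaurentSeries R} (hg : 0 < g.order) (m : ℕ) :
    (∀ t < m, g.coeff ((t : ℤ) + 1) = 0) ↔ (m : ℤ) < g.order := by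
  refine ⟨fun H => not_le.1 fun hle => ?_, fun H t ht => coeff_eq_zero_of_lt_order (by omega)⟩
  have hg0 : g ≠ 0 := fun h => by simp [h] at hg
  obtain ⟨t, ht⟩ : ∃ t : ℕ, g.order = (t : ℤ) + 1 := ⟨(g.order - 1).toNat, by omega⟩
  exact hg0 (coeff_order_eq_zero.1 (ht ▸ H t (by omega)))

theorem Polynomial.exists_degree_lt_dvd_sub_iff {K : Type*} [Field K] {p : K[X]} {D : WithBot ℕ}
    (hD : D ≤ p.degree) (v : K[X]) :
    (∃ a : K[X], a.degree < D ∧ p ∣ v - a) ↔ (v % p).degree < D := by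
  refine ⟨fun ⟨a, ha, hpa⟩ => ?_, fun h => ⟨v % p, h, ?_⟩⟩
  · rwa [mod_eq_of_dvd_sub hpa, (mod_eq_self_iff (ne_zero_of_degree_gt (ha.trans_le hD))).2
      (ha.trans_le hD)]
  · rw [EuclideanDomain.mod_eq_sub_mul_div, sub_sub_cancel]
    exact dvd_mul_right p _

section PolyInv

variable {b : ℕ}

theorem polyInv_eq_eval₂RingHom (u : (ZMod b)[X]) :
    polyInv u = eval₂RingHom HahnSeries.C (HahnSeries.single (-1 : ℤ) 1) u := by
  rw [coe_eval₂RingHom, eval₂_eq_sum, Polynomial.sum, polyInv]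
  refine Finset.sum_congr rfl fun i _ => ?_
  rw [HahnSeries.single_pow, one_pow, HahnSeries.C_apply, HahnSeries.single_mul_single,
    zero_add, mul_one, nsmul_eq_mul, mul_neg_one]

theorem polyInv_mul (u v : (ZMod b)[X]) : polyInv (u * v) = polyInv u * polyInv v := by
  simp only [polyInv_eq_eval₂RingHom, map_mul]

theorem polyInv_add (u v : (ZMod b)[X]) : polyInv (u + v) = polyInv u + polyInv v := by
  simp only [polyInv_eq_eval₂RingHom, map_add]

theorem polyInv_sum {α : Type*} (s : Finset α) (f : α → (ZMod b)[X]) :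
    polyInv (∑ x ∈ s, f x) = ∑ x ∈ s, polyInv (f x) := by
  simp only [polyInv_eq_eval₂RingHom, map_sum]

theorem polyInv_C_mul_X_pow (a : ZMod b) (i : ℕ) :
    polyInv (C a * X ^ i) = HahnSeries.single (-(i : ℤ)) a := by
  rw [polyInv_eq_eval₂RingHom, map_mul, map_pow, coe_eval₂RingHom, eval₂_C, eval₂_X,
    HahnSeries.single_pow, one_pow, HahnSeries.C_apply, HahnSeries.single_mul_single,
    zero_add, mul_one, nsmul_eq_mul, mul_neg_one]

theorem coeff_polyInv_neg_natCast (u : (ZMod b)[X]) (i : ℕ) :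
    (polyInv u).coeff (-(i : ℤ)) = u.coeff i := by
  classical
  simp only [polyInv, HahnSeries.coeff_sum, HahnSeries.coeff_single, neg_inj, Nat.cast_inj,
    Finset.sum_ite_eq, mem_support_iff, ne_eq, ite_not]
  split_ifs with h <;> simp [h]

theorem coeff_polyInv_of_pos (u : (ZMod b)[X]) {d : ℤ} (hd : 0 < d) :
    (polyInv u).coeff d = 0 := by
  simp only [polyInv, HahnSeries.coeff_sum]
  exact Finset.sum_eq_zero fun i _ => HahnSeries.coeff_single_of_ne (by omega)

theorem polyInv_ne_zero {u : (ZMod b)[X]} (hu : u ≠ 0) : polyInv u ≠ 0 := fun h =>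
  hu (ext fun i => by rw [← coeff_polyInv_neg_natCast, h, HahnSeries.coeff_zero, coeff_zero])

theorem order_polyInv {u : (ZMod b)[X]} (hu : u ≠ 0) :
    (polyInv u).order = -(u.natDegree : ℤ) := by
  have hlead : (polyInv u).coeff (-(u.natDegree : ℤ)) ≠ 0 := by
    rwa [coeff_polyInv_neg_natCast, ← leadingCoeff, leadingCoeff_ne_zero]
  refine le_antisymm (HahnSeries.order_le_of_coeff_ne_zero hlead) (not_lt.1 fun hlt => ?_)
  have hcoeff : (polyInv u).coeff (polyInv u).order = 0 := by
    obtain ⟨i, hi⟩ : ∃ i : ℕ, (polyInv u).order = -(i : ℤ) := ⟨(-(polyInv u).order).toNat, by omega⟩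
    rw [hi, coeff_polyInv_neg_natCast]
    exact coeff_eq_zero_of_natDegree_lt (by omega)
  exact polyInv_ne_zero hu (HahnSeries.coeff_order_eq_zero.1 hcoeff)

theorem coeff_one_polyInv_sum_C_mul_X_pow_mul (s : Finset ℕ) (c : ℕ → ZMod b)
    (F : LaurentSeries (ZMod b)) :
    (polyInv (∑ i ∈ s, C (c i) * X ^ i) * F).coeff 1 = ∑ i ∈ s, c i * F.coeff ((i : ℤ) + 1) := by
  rw [polyInv_sum, Finset.sum_mul, HahnSeries.coeff_sum]
  refine Finset.sum_congr rfl fun i _ => ?_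
  rw [polyInv_C_mul_X_pow, ← HahnSeries.coeff_single_mul_add (a := (i : ℤ) + 1)]
  congr 1
  ring

end PolyInv

theorem pow_div_pow_mod_eq_ite {b : ℕ} (hb : 1 < b) (t i : ℕ) :
    b ^ t / b ^ i % b = if i = t then 1 else 0 := by
  rcases lt_trichotomy i t with hit | rfl | hti
  · rw [if_neg hit.ne, Nat.pow_div hit.le (by omega), Nat.pow_mod, Nat.mod_self,
      zero_pow (by omega), Nat.zero_mod]
  · rw [if_pos rfl, Nat.div_self (by positivity), Nat.mod_eq_of_lt hb]
  · rw [if_neg hti.ne', Nat.div_eq_of_lt (Nat.pow_lt_pow_right hb hti), Nat.zero_mod]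

theorem forall_coeff_one_polyInv_natToPoly_mul_eq_zero_iff {b : ℕ} (hb : 1 < b) (m : ℕ)
    (G : LaurentSeries (ZMod b)) :
    (∀ h < b ^ m, (polyInv (natToPoly b h) * G).coeff 1 = 0) ↔
      ∀ t < m, G.coeff ((t : ℤ) + 1) = 0 := by
  simp only [natToPoly, coeff_one_polyInv_sum_C_mul_X_pow_mul]
  constructor
  · intro H t ht
    have hbt : t < b ^ t + 1 := (Nat.lt_pow_self hb).trans (Nat.lt_succ_self _)
    simpa [pow_div_pow_mod_eq_ite hb, hbt] using H (b ^ t) (Nat.pow_lt_pow_right hb ht)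
  · intro H h hh
    refine Finset.sum_eq_zero fun i _ => ?_
    rcases lt_or_ge i m with him | him
    · rw [H i him, mul_zero]
    · rw [Nat.div_eq_of_lt (hh.trans_le (Nat.pow_le_pow_right (by omega) him))]
      simp

section Field

variable {b : ℕ} [Fact b.Prime]

theorem sum_digit_mul_coeff_polyInv_div {s n : ℕ} (u p : (ZMod b)[X]) (q : Fin s → (ZMod b)[X])
    (k : Fin s → ℕ) :
    ∑ j, ∑ i : Fin n, ((k j / b ^ (i : ℕ) % b : ℕ) : ZMod b) *
        (polyInv (u * q j) / polyInv p).coeff ((i : ℕ) + 1) =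
      (polyInv u * (polyInv (∑ j, trn b n (k j) * q j) / polyInv p)).coeff 1 := by
  have hsplit : polyInv u * (polyInv (∑ j, trn b n (k j) * q j) / polyInv p) =
      ∑ j, polyInv (trn b n (k j)) * (polyInv (u * q j) / polyInv p) := by
    simp only [polyInv_sum, polyInv_mul, Finset.mul_sum, Finset.sum_div]
    refine Finset.sum_congr rfl fun j _ => ?_
    ring
  rw [hsplit, HahnSeries.coeff_sum]
  refine Finset.sum_congr rfl fun j _ => ?_
  rw [trn, coeff_one_polyInv_sum_C_mul_X_pow_mul, Finset.sum_range
    (fun i => ((k j / b ^ i % b : ℕ) : ZMod b) * _)]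

theorem coeff_polyInv_mod_div {p : (ZMod b)[X]} (hp : p ≠ 0) (v : (ZMod b)[X]) {d : ℤ}
    (hd : 0 < d) : (polyInv (v % p) / polyInv p).coeff d = (polyInv v / polyInv p).coeff d := by
  conv_rhs => rw [← EuclideanDomain.div_add_mod v p]
  rw [polyInv_add, polyInv_mul, add_div, mul_div_cancel_left₀ _ (polyInv_ne_zero hp),
    HahnSeries.coeff_add, coeff_polyInv_of_pos _ hd, zero_add]

theorem order_polyInv_div {r p : (ZMod b)[X]} (hr : r ≠ 0) (hp : p ≠ 0) :
    (polyInv r / polyInv p).order = (p.natDegree : ℤ) - r.natDegree := by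
  have hmul := HahnSeries.order_mul (div_ne_zero (polyInv_ne_zero hr) (polyInv_ne_zero hp))
    (polyInv_ne_zero hp)
  rw [div_mul_cancel₀ _ (polyInv_ne_zero hp), order_polyInv hr, order_polyInv hp] at hmul
  omega

theorem forall_coeff_polyInv_div_eq_zero_iff {r p : (ZMod b)[X]} (hp : p ≠ 0)
    (hrp : r.degree < p.degree) (m : ℕ) :
    (∀ t < m, (polyInv r / polyInv p).coeff ((t : ℤ) + 1) = 0) ↔
      r.degree < (p.natDegree - m : ℕ) := by
  by_cases hr : r = 0
  · simp [hr, polyInv_eq_eval₂RingHom]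
  have hdeg : r.natDegree < p.natDegree := natDegree_lt_natDegree hr hrp
  rw [HahnSeries.forall_coeff_natCast_add_one_eq_zero_iff (by rw [order_polyInv_div hr hp]; omega),
    order_polyInv_div hr hp, ← natDegree_lt_iff_degree_lt hr]
  omega

end Field

theorem hoplr_dual_net_general (b : ℕ) [Fact b.Prime] (s m n : ℕ)
    (p : Polynomial (ZMod b)) (hp : p.degree = (n : WithBot ℕ))
    (q : Fin s → Polynomial (ZMod b)) (k : Fin s → ℕ) :
    (∀ h : ℕ, h < b ^ m →
        ∑ j, ∑ i : Fin n, ((k j / b ^ (i : ℕ) % b : ℕ) : ZMod b) *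
          (polyInv (natToPoly b h * q j) / polyInv p).coeff ((i : ℕ) + 1) = 0)
    ↔ ∃ a : Polynomial (ZMod b), a.degree < ((n - m : ℕ) : WithBot ℕ) ∧
        p ∣ (∑ j, trn b n (k j) * q j - a) := by
  have hp0 : p ≠ 0 := fun h => by simp [h] at hp
  simp only [sum_digit_mul_coeff_polyInv_div]
  set v := ∑ j, trn b n (k j) * q j
  rw [forall_coeff_one_polyInv_natToPoly_mul_eq_zero_iff (Fact.out : b.Prime).one_lt]
  simp (disch := positivity) only [← coeff_polyInv_mod_div hp0 v]
  rw [forall_coeff_polyInv_div_eq_zero_iff hp0 (degree_mod_lt v hp0),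
    natDegree_eq_of_degree_eq_some hp,
    exists_degree_lt_dvd_sub_iff (hp ▸ WithBot.coe_le_coe.2 (Nat.sub_le n m))]

/-- **Lemma (dual net of a higher order polynomial lattice point set).**
Let `b` be prime, `m ≤ n`, `p ∈ Z_b[x]` with `deg p = n` and `q ∈ Z_b[x]^s`. A vector
`k ∈ ℕ₀^s` lies in the dual net of the higher order polynomial lattice point set
`P_{b^m,s}(q,p)` — whose `h`-th point has `j`-th coordinate with `i`-th digit the
coefficient `t_i^{(j)}` of `x^{-i}` in the Laurent expansion of `h(x)q_j(x)/p(x)` —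
iff `tr_n(k_1) q_1 + ⋯ + tr_n(k_s) q_s ≡ a (mod p)` for some `a` with `deg a < n - m`. -/
theorem hoplr_dual_net (b : ℕ) [Fact b.Prime] (s m n : ℕ) (hmn : m ≤ n)
    (p : Polynomial (ZMod b)) (hp : p.degree = (n : WithBot ℕ))
    (q : Fin s → Polynomial (ZMod b)) (k : Fin s → ℕ) :
    (∀ h : ℕ, h < b ^ m →
        ∑ j, ∑ i : Fin n, ((k j / b ^ (i : ℕ) % b : ℕ) : ZMod b) *
          (polyInv (natToPoly b h * q j) / polyInv p).coeff ((i : ℕ) + 1) = 0)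
    ↔ ∃ a : Polynomial (ZMod b), a.degree < ((n - m : ℕ) : WithBot ℕ) ∧
        p ∣ (∑ j, trn b n (k j) * q j - a) :=
  hoplr_dual_net_general b s m n p hp q k
end
end

section
/- Let b ≥ 2 be an integer, x, x' ∈ [0,1]^s and N ∈ ℕ. If x' ∈ I_{N+1}(x), then the set S = { z ∈ [0,1]^s : φ_b(x' ⊕ z) ∉ I_N(φ_b(x ⊕ z)) } has Lebesgue measure 0. -/
open MeasureTheory Finset

noncomputable section

/-- The `i`-th `b`-adic digit `ξ_{i+1}` of `x ∈ [0,1]` (`0`-indexed), with respect to the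
unique `b`-adic expansion of `x` in which infinitely many digits differ from `b-1`
whenever `x ≠ 1`, and all digits equal `b-1` when `x = 1`. -/
def bdigit (b : ℕ) (x : ℝ) (i : ℕ) : ℕ :=
  if x = 1 then b - 1 else (⌊x * (b : ℝ) ^ (i + 1)⌋).toNat % b

/-- Digitwise addition modulo `b` on `[0,1]`. -/
def badd (b : ℕ) (x y : ℝ) : ℝ :=
  ∑' i : ℕ, (((bdigit b x i + bdigit b y i) % b : ℕ) : ℝ) / (b : ℝ) ^ (i + 1)

/-- The `b`-adic tent transformation `φ_b`: the digits of `φ_b(x)` are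
`η_i = ξ_{i+1} - ξ_1 (mod b)` where `(ξ_i)` are the digits of `x`. -/
def btent (b : ℕ) (x : ℝ) : ℝ :=
  ∑' i : ℕ, (((bdigit b x (i + 1) + (b - bdigit b x 0)) % b : ℕ) : ℝ) / (b : ℝ) ^ (i + 1)

/-- The `k`-th `b`-adic Walsh function `wal_k(x) = ω_b^(κ_0 ξ_1 + κ_1 ξ_2 + ⋯)`. -/
def bwal (b k : ℕ) (x : ℝ) : ℂ :=
  Complex.exp (2 * Real.pi * Complex.I / b) ^
    (∑ i ∈ Finset.range k, (k / b ^ i % b) * bdigit b x i)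

/-- The unit cube `[0,1]^s`. -/
def cube (s : ℕ) : Set (Fin s → ℝ) := Set.Icc 0 1

/-- Componentwise digitwise addition modulo `b`. -/
def baddV (b : ℕ) {s : ℕ} (x y : Fin s → ℝ) : Fin s → ℝ := fun j => badd b (x j) (y j)

/-- Componentwise `b`-adic tent transformation on `[0,1]^s`. -/
def btentV (b : ℕ) {s : ℕ} (x : Fin s → ℝ) : Fin s → ℝ := fun j => btent b (x j)

/-- The `k`-th multidimensional `b`-adic Walsh function. -/
def bwalV (b : ℕ) {s : ℕ} (k : Fin s → ℕ) (x : Fin s → ℝ) : ℂ := ∏ j, bwal b (k j) (x j)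

/-!
Write `e_i = ξ_i(x_j) + ζ_i(z_j)` (mod `b`) for the digit sums. As long as `e` is not eventually
constant, neither `e` nor `(e_{i+1} - e_0)` ends in the digit `b - 1`, so these are the actual
digits of `x_j ⊕ z_j` and of `φ_b(x_j ⊕ z_j)`. Then digit `i` of `φ_b(x_j ⊕ z_j)` depends only on
the digits `0` and `i + 1` of `x_j`, which agree for `x` and `x'` when `i < N`. The exceptional
`z_j` have a prescribed tail of digits, and a tail pins down a point of `[0,1)` up to its finitely
many leading digits, so the exceptional set is a countable union of null cylinders.
-/

open Filter

theorem Nat.frequently_atTop_succ {p : ℕ → Prop} (h : ∃ᶠ i in atTop, p i) :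
    ∃ᶠ i in atTop, p (i + 1) := by
  rw [← map_add_atTop_eq_nat 1] at h
  exact frequently_map.1 h

theorem Set.finite_setOf_forall_ge_eq {α : Type*} [Finite α] (g : ℕ → α) (M : ℕ) :
    {d : ℕ → α | ∀ i ≥ M, d i = g i}.Finite := by
  refine Set.Finite.of_finite_image (f := fun d (i : Fin M) => d i) (Set.toFinite _) ?_
  intro d hd d' hd' h
  funext i
  rcases lt_or_ge i M with hi | hi
  · exact congrFun h ⟨i, hi⟩
  · rw [hd i hi, hd' i hi]

namespace Real

variable {b : ℕ}

theorem ofDigits_lt_one {d : ℕ → Fin b} {i : ℕ} (hi : (d i : ℕ) ≠ b - 1) : ofDigits d < 1 := by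
  have hb : 1 < b := by have := (d i).isLt; omega
  rw [← ofDigits_const_last_eq_one' hb]
  refine Summable.tsum_lt_tsum (i := i) (fun n => ?_) ?_
    summable_ofDigitsTerm summable_ofDigitsTerm
  · simp only [ofDigitsTerm, Nat.cast_sub hb.le, Nat.cast_one]
    exact ofDigitsTerm_le
  · simp only [ofDigitsTerm]
    have : ((d i : ℕ) : ℝ) < ((b - 1 : ℕ) : ℝ) := by have := (d i).isLt; exact_mod_cast (by omega)
    gcongr

theorem ofDigits_mul_base (d : ℕ → Fin b) :
    ofDigits d * b = d 0 + ofDigits (fun i => d (i + 1)) := by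
  rcases Nat.eq_zero_or_pos b with rfl | hb
  · exact (d 0).elim0
  rw [ofDigits_eq_sum_add_ofDigits d 1]
  simp only [range_one, ofDigitsTerm, sum_singleton, zero_add, pow_one]
  field_simp

theorem floor_ofDigits_mul_pow_succ (d : ℕ → Fin b) (n : ℕ) :
    ⌊ofDigits d * (b : ℝ) ^ (n + 1)⌋₊ =
      ⌊ofDigits (fun i => d (i + 1)) * (b : ℝ) ^ n⌋₊ + d 0 * b ^ n := by
  rw [pow_succ', ← mul_assoc, ofDigits_mul_base, add_mul, add_comm, ← Nat.floor_add_natCast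
    (mul_nonneg (ofDigits_nonneg _) (by positivity))]
  push_cast
  rfl

theorem floor_ofDigits_mul_pow_succ_mod {d : ℕ → Fin b}
    (hd : ∃ᶠ i in atTop, (d i : ℕ) ≠ b - 1) (n : ℕ) :
    ⌊ofDigits d * (b : ℝ) ^ (n + 1)⌋₊ % b = d n := by
  induction n generalizing d with
  | zero =>
    obtain ⟨i, hi⟩ := (Nat.frequently_atTop_succ hd).exists
    have htail : ofDigits (fun i => d (i + 1)) < 1 := ofDigits_lt_one hi
    rw [floor_ofDigits_mul_pow_succ, pow_zero, pow_zero, mul_one, mul_one,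
      Nat.floor_eq_zero.2 htail, zero_add, Nat.mod_eq_of_lt (d 0).isLt]
  | succ n ih =>
    rw [floor_ofDigits_mul_pow_succ, pow_succ b n, ← mul_assoc, Nat.add_mul_mod_self_right]
    exact ih (Nat.frequently_atTop_succ hd)

theorem digits_ofDigits [NeZero b] {d : ℕ → Fin b} (hd : ∃ᶠ i in atTop, (d i : ℕ) ≠ b - 1) :
    digits (ofDigits d) b = d :=
  funext fun n => Fin.ext <| by
    simp only [digits, Fin.val_ofNat, floor_ofDigits_mul_pow_succ_mod hd]

end Real

theorem Fin.val_neg_one_of_neZero {n : ℕ} [NeZero n] : ((-1 : Fin n) : ℕ) = n - 1 := by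
  obtain ⟨m, rfl⟩ := Nat.exists_eq_succ_of_ne_zero (NeZero.ne n)
  exact Fin.coe_neg_one

section Digits

variable {b : ℕ} [NeZero b]

theorem bdigit_lt (x : ℝ) (i : ℕ) : bdigit b x i < b := by
  unfold bdigit
  split_ifs
  · exact Nat.sub_one_lt (NeZero.ne b)
  · exact Nat.mod_lt _ (NeZero.pos b)

variable (b) in
def bdigitFin (x : ℝ) (i : ℕ) : Fin b := ⟨bdigit b x i, bdigit_lt x i⟩

theorem bdigitFin_eq_digits {x : ℝ} (hx : x ≠ 1) : bdigitFin b x = Real.digits x b := by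
  funext i
  ext
  simp [bdigitFin, bdigit, hx, Real.digits, Int.floor_toNat]

theorem badd_eq_ofDigits (x y : ℝ) :
    badd b x y = Real.ofDigits (bdigitFin b x + bdigitFin b y) := by
  simp only [badd, Real.ofDigits, Real.ofDigitsTerm, div_eq_mul_inv]
  rfl

theorem btent_eq_ofDigits (x : ℝ) :
    btent b x = Real.ofDigits (fun i => bdigitFin b x (i + 1) - bdigitFin b x 0) := by
  simp only [btent, Real.ofDigits, Real.ofDigitsTerm, div_eq_mul_inv, Fin.sub_def]
  simp_rw [add_comm (b - _)]
  rfl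

theorem bdigitFin_ofDigits {d : ℕ → Fin b} (hd : ∃ᶠ i in atTop, d i ≠ -1) :
    bdigitFin b (Real.ofDigits d) = d := by
  have hd' : ∃ᶠ i in atTop, (d i : ℕ) ≠ b - 1 :=
    hd.mono fun i hi => by rwa [Ne, ← Fin.val_neg_one_of_neZero, Fin.val_inj]
  obtain ⟨i, hi⟩ := hd'.exists
  rw [bdigitFin_eq_digits (Real.ofDigits_lt_one hi).ne, Real.digits_ofDigits hd']

theorem bdigitFin_btent_badd {x y : ℝ}
    (h : ∀ c, ∃ᶠ i in atTop, bdigitFin b x i + bdigitFin b y i ≠ c) (n : ℕ) :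
    bdigitFin b (btent b (badd b x y)) n =
      bdigitFin b x (n + 1) + bdigitFin b y (n + 1) - (bdigitFin b x 0 + bdigitFin b y 0) := by
  have hadd : bdigitFin b (badd b x y) = bdigitFin b x + bdigitFin b y := by
    rw [badd_eq_ofDigits]
    exact bdigitFin_ofDigits (h (-1))
  rw [btent_eq_ofDigits, hadd, bdigitFin_ofDigits]
  · rfl
  · refine (Nat.frequently_atTop_succ (h (bdigitFin b x 0 + bdigitFin b y 0 - 1))).mono ?_
    intro i hi h'
    exact hi ((sub_eq_iff_eq_add'.1 h').trans (sub_eq_add_neg _ _).symm)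

theorem finite_setOf_bdigitFin_eq_of_ge (hb : 1 < b) (g : ℕ → Fin b) (M : ℕ) :
    {r ∈ Set.Icc (0 : ℝ) 1 | ∀ i ≥ M, bdigitFin b r i = g i}.Finite := by
  refine (((Set.finite_setOf_forall_ge_eq g M).image Real.ofDigits).insert 1).subset ?_
  rintro r ⟨hr, hrg⟩
  rcases eq_or_ne r 1 with rfl | hr1
  · exact Set.mem_insert _ _
  refine Or.inr ⟨Real.digits r b, fun i hi => ?_, Real.ofDigits_digits hb ⟨hr.1, hr.2.lt_of_ne hr1⟩⟩
  rw [← bdigitFin_eq_digits hr1, hrg i hi]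

theorem countable_setOf_bdigitFin_add_eventually_eq (hb : 1 < b) (y : ℝ) :
    {r ∈ Set.Icc (0 : ℝ) 1 |
      ∃ c, ∀ᶠ i in atTop, bdigitFin b y i + bdigitFin b r i = c}.Countable := by
  refine (Set.countable_iUnion fun c => Set.countable_iUnion fun M =>
    (finite_setOf_bdigitFin_eq_of_ge hb (fun i => c - bdigitFin b y i) M).countable).mono ?_
  rintro r ⟨hr, c, hc⟩
  obtain ⟨M, hM⟩ := eventually_atTop.1 hc
  exact Set.mem_iUnion₂.2 ⟨c, M, hr, fun i hi => eq_sub_of_add_eq' (hM i hi)⟩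

end Digits

theorem tent_shift_measure_zero_general (b : ℕ) (hb : 2 ≤ b) (s N : ℕ)
    (x x' : Fin s → ℝ)
    (hI : ∀ j, ∀ i < N + 1, bdigit b (x' j) i = bdigit b (x j) i) :
    volume {z : Fin s → ℝ | z ∈ cube s ∧ ∃ j, ∃ i < N,
        bdigit b (btent b (badd b (x' j) (z j))) i
          ≠ bdigit b (btent b (badd b (x j) (z j))) i} = 0 := by
  have : NeZero b := ⟨by omega⟩
  set E := fun y : ℝ =>
    {r ∈ Set.Icc (0 : ℝ) 1 | ∃ c, ∀ᶠ i in atTop, bdigitFin b y i + bdigitFin b r i = c}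
  refine measure_mono_null (t := ⋃ j, (fun z => z j) ⁻¹' (E (x j) ∪ E (x' j))) ?_
    (measure_iUnion_null fun j => ?_)
  · rintro z ⟨hz, j, i, hi, hne⟩
    refine Set.mem_iUnion.2 ⟨j, by_contra fun hE => hne ?_⟩
    have hgood (y : ℝ) (hy : z j ∉ E y) (c : Fin b) :
        ∃ᶠ i in atTop, bdigitFin b y i + bdigitFin b (z j) i ≠ c :=
      not_eventually.1 fun h => hy ⟨⟨hz.1 j, hz.2 j⟩, c, h⟩
    have hIj (i : ℕ) (hi : i < N + 1) : bdigitFin b (x' j) i = bdigitFin b (x j) i :=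
      Fin.ext (hI j i hi)
    obtain ⟨hx, hx'⟩ := not_or.1 hE
    change (bdigitFin b _ i : ℕ) = bdigitFin b _ i
    rw [bdigitFin_btent_badd (hgood _ hx'), bdigitFin_btent_badd (hgood _ hx),
      hIj (i + 1) (by omega), hIj 0 (by omega)]
  · rw [volume_pi]
    refine Measure.pi_eval_preimage_null _ (Set.Countable.measure_zero ?_ _)
    exact (countable_setOf_bdigitFin_add_eventually_eq (by omega) _).union
      (countable_setOf_bdigitFin_add_eventually_eq (by omega) _)

/-- **Lemma (folding and shifting almost surely preserves closeness).**
Let `b ≥ 2`, `x, x' ∈ [0,1]^s` and `N ∈ ℕ`. If `x' ∈ I_{N+1}(x)` (the first `N+1` `b`-adic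
digits of each coordinate agree), then the set
`S = {z ∈ [0,1]^s : φ_b(x' ⊕ z) ∉ I_N(φ_b(x ⊕ z))}` has Lebesgue measure `0`. -/
theorem tent_shift_measure_zero (b : ℕ) (hb : 2 ≤ b) (s N : ℕ)
    (x x' : Fin s → ℝ) (hx : x ∈ cube s) (hx' : x' ∈ cube s)
    (hI : ∀ j, ∀ i < N + 1, bdigit b (x' j) i = bdigit b (x j) i) :
    volume {z : Fin s → ℝ | z ∈ cube s ∧ ∃ j, ∃ i < N,
        bdigit b (btent b (badd b (x' j) (z j))) i
          ≠ bdigit b (btent b (badd b (x j) (z j))) i} = 0 :=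
  tent_shift_measure_zero_general b hb s N x x' hI
end
end
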